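/- Let α ∈ ℝ, S ⊆ {1,…,M}, and define the α-weighted relevance R̃_α^S = Σ_{all walks m ∈ {1,…,M}^{L+1}} α^{#{l : m_l ∉ S}} Σ_n (r^{0,m})_n, where r^{0,m} is the product-form walk relevance. Then the recursion r̆^{(L,m)} = r^{L,m}, r̆^{(l,m)} = Σ_{m' = 1}^{M} α^{[m' ∉ S]} T^{l,m,m'} r̆^{(l+1,m')} (with [·] the indicator taking value 1 when the condition holds and 0 otherwise, and with the convention α^0 = 1 even if α = 0) satisfies R̃_α^S = Σ_{m_0 = 1}^{M} α^{[m_0 ∉ S]} Σ_n (r̆^{(0,m_0)})_n. -/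
import Mathlib


open Finset

/-- Backward product: `backVec N A L v = A 0 *ᵥ (A 1 *ᵥ ⋯ (A (L-1) *ᵥ v))`. -/
def backVec (N : ℕ → ℕ) (A : ∀ l : ℕ, Matrix (Fin (N l)) (Fin (N (l+1))) ℝ) :
    (L : ℕ) → (Fin (N L) → ℝ) → (Fin (N 0) → ℝ)
  | 0, v => v
  | (L+1), v => backVec N A L ((A L).mulVec v)

/-- Extend a walk `Fin (L+1) → Fin M` to all of `ℕ` (constant after `L`). -/
def extWalk {L M : ℕ} (w : Fin (L+1) → Fin M) : ℕ → Fin M :=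
  fun l => w ⟨min l L, by omega⟩

/-- Walk relevance vector
`r^{0,m} = T^{0,m_0,m_1} T^{1,m_1,m_2} ⋯ T^{L-1,m_{L-1},m_L} r^{L,m_L}`. -/
def walkVec (L M : ℕ) (N : ℕ → ℕ)
    (T : ∀ l : ℕ, Fin M → Fin M → Matrix (Fin (N l)) (Fin (N (l+1))) ℝ)
    (rL : Fin M → Fin (N L) → ℝ) (w : Fin (L+1) → Fin M) : Fin (N 0) → ℝ :=
  backVec N (fun l => T l (extWalk w l) (extWalk w (l+1))) L (rL (extWalk w L))

lemma backVec_congr (N : ℕ → ℕ) (A A' : ∀ l : ℕ, Matrix (Fin (N l)) (Fin (N (l+1))) ℝ) :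
    ∀ (k : ℕ), (∀ l, l < k → A l = A' l) → ∀ v, backVec N A k v = backVec N A' k v
  | 0, _, v => rfl
  | (k+1), h, v => by
      rw [backVec, backVec, h k (by omega),
        backVec_congr N A A' k (fun l hl => h l (by omega))]

def backVecL (N : ℕ → ℕ) (A : ∀ l : ℕ, Matrix (Fin (N l)) (Fin (N (l+1))) ℝ) :
    (L : ℕ) → ((Fin (N L) → ℝ) →ₗ[ℝ] (Fin (N 0) → ℝ))
  | 0 => LinearMap.id
  | (L+1) => (backVecL N A L).comp (Matrix.mulVecLin (A L))

lemma backVec_eq (N : ℕ → ℕ) (A : ∀ l : ℕ, Matrix (Fin (N l)) (Fin (N (l+1))) ℝ) :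
    ∀ (k : ℕ) (v : Fin (N k) → ℝ), backVec N A k v = backVecL N A k v
  | 0, v => rfl
  | (k+1), v => by
      rw [backVec, backVec_eq N A k]; rfl

lemma pow_filter (α : ℝ) {n : ℕ} (p : Fin n → Prop) [DecidablePred p] :
    α ^ (univ.filter p).card = ∏ i, if p i then α else 1 := by
  rw [Finset.prod_ite, Finset.prod_const, Finset.prod_const, one_pow, mul_one]

/-- Generalized (α-weighted) sGNN-LRP: the discounted backward recursion computes
`R̃_α^S = Σ_m α^{#{l : m_l ∉ S}} R^m`. -/
theorem generalized_subgraph_gnn_lrp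
    (L M : ℕ) (hL : 1 ≤ L) (N : ℕ → ℕ)
    (T : ∀ l : ℕ, Fin M → Fin M → Matrix (Fin (N l)) (Fin (N (l+1))) ℝ)
    (rL : Fin M → Fin (N L) → ℝ)
    (S : Finset (Fin M)) (α : ℝ)
    (rb : ∀ l : ℕ, Fin M → Fin (N l) → ℝ)
    (hbase : ∀ m : Fin M, rb L m = rL m)
    (hstep : ∀ l : ℕ, l < L → ∀ m : Fin M,
      rb l m = ∑ m' : Fin M,
        (if m' ∈ S then (1 : ℝ) else α) • (T l m m').mulVec (rb (l+1) m')) :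
    (∑ w : Fin (L+1) → Fin M,
        α ^ ((Finset.univ.filter (fun l : Fin (L+1) => w l ∉ S)).card) *
          ∑ n, walkVec L M N T rL w n)
      = ∑ m0 : Fin M, (if m0 ∈ S then (1 : ℝ) else α) * ∑ n, rb 0 m0 n := by
  simp only [walkVec]
  have key : ∀ k, k ≤ L →
      (∑ w : Fin (k+1) → Fin M,
        α ^ ((Finset.univ.filter (fun l : Fin (k+1) => w l ∉ S)).card) *
          ∑ n, (backVec N (fun l => T l (extWalk w l) (extWalk w (l+1))) k (rb k (extWalk w k))) n)
      = ∑ m0 : Fin M, (if m0 ∈ S then (1 : ℝ) else α) * ∑ n, rb 0 m0 n := by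
    intro k
    induction k with
    | zero =>
      intro _
      rw [← Equiv.sum_comp (Equiv.funUnique (Fin 1) (Fin M)).symm]
      apply Finset.sum_congr rfl
      intro m _
      congr 1
      by_cases hm : m ∈ S <;>
        simp [Equiv.funUnique, hm, Finset.filter_eq_empty_iff, Finset.filter_true_of_mem,
          Fin.forall_fin_one]
    | succ k ih =>
      intro hk
      have hkL : k < L := by omega
      -- sum over snoc
      rw [← Equiv.sum_comp (Fin.snocEquiv (fun _ : Fin (k+2) => Fin M)),
        Fintype.sum_prod_type, Finset.sum_comm]
      have hext1 : ∀ (w : Fin (k+1) → Fin M) (m : Fin M) (l : ℕ), l ≤ k →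
          extWalk (Fin.snoc w m : Fin (k+2) → Fin M) l = extWalk w l := by
        intro w m l hl
        have h1 : min l (k+1) = l := by omega
        have h2 : min l k = l := by omega
        show (Fin.snoc w m : Fin (k+2) → Fin M) ⟨min l (k+1), by omega⟩ = w ⟨min l k, by omega⟩
        have : (⟨min l (k+1), by omega⟩ : Fin (k+2)) = Fin.castSucc ⟨min l k, by omega⟩ := by
          simp [Fin.ext_iff, h1, h2]
        rw [this, Fin.snoc_castSucc]
      have hext2 : ∀ (w : Fin (k+1) → Fin M) (m : Fin M),
          extWalk (Fin.snoc w m : Fin (k+2) → Fin M) (k+1) = m := by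
        intro w m
        show (Fin.snoc w m : Fin (k+2) → Fin M) ⟨min (k+1) (k+1), by omega⟩ = m
        have : (⟨min (k+1) (k+1), by omega⟩ : Fin (k+2)) = Fin.last (k+1) := by
          simp [Fin.ext_iff]
        rw [this, Fin.snoc_last]
      have he : ∀ (w : Fin (k+1) → Fin M) (m : Fin M),
          (Fin.snocEquiv (fun _ : Fin (k+2) => Fin M)) (m, w) = (Fin.snoc w m : Fin (k+2) → Fin M) :=
        fun _ _ => rfl
      rw [← ih (by omega)]
      apply Finset.sum_congr rfl
      intro w _
      -- weight splits
      have hw : ∀ m : Fin M,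
          α ^ ((Finset.univ.filter (fun l : Fin (k+2) => (Fin.snocEquiv (fun _ : Fin (k+2) => Fin M)) (m, w) l ∉ S)).card)
          = α ^ ((Finset.univ.filter (fun l : Fin (k+1) => w l ∉ S)).card)
            * (if m ∈ S then (1:ℝ) else α) := by
        intro m
        rw [pow_filter, pow_filter, he, Fin.prod_univ_castSucc]
        congr 1
        · apply Finset.prod_congr rfl
          intro i _
          rw [Fin.snoc_castSucc]
        · rw [Fin.snoc_last]
          by_cases hm : m ∈ S <;> simp [hm]
      -- backVec splits
      have hb : ∀ m : Fin M,
          backVec N (fun l => T l (extWalk ((Fin.snocEquiv (fun _ : Fin (k+2) => Fin M)) (m, w)) l) (extWalk ((Fin.snocEquiv (fun _ : Fin (k+2) => Fin M)) (m, w)) (l+1))) (k+1)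
            (rb (k+1) (extWalk ((Fin.snocEquiv (fun _ : Fin (k+2) => Fin M)) (m, w)) (k+1)))
          = backVec N (fun l => T l (extWalk w l) (extWalk w (l+1))) k
            ((T k (extWalk w k) m).mulVec (rb (k+1) m)) := by
        intro m
        rw [he, backVec]
        rw [backVec_congr N _ (fun l => T l (extWalk w l) (extWalk w (l+1))) k
          (fun l hl => by rw [hext1 w m l (by omega), hext1 w m (l+1) (by omega)])]
        rw [hext1 w m k (le_refl k), hext2 w m]
      calc ∑ m : Fin M,
            α ^ ((Finset.univ.filter (fun l : Fin (k+2) => (Fin.snocEquiv (fun _ : Fin (k+2) => Fin M)) (m, w) l ∉ S)).card) *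
              ∑ n, (backVec N (fun l => T l (extWalk ((Fin.snocEquiv (fun _ : Fin (k+2) => Fin M)) (m, w)) l) (extWalk ((Fin.snocEquiv (fun _ : Fin (k+2) => Fin M)) (m, w)) (l+1))) (k+1)
                (rb (k+1) (extWalk ((Fin.snocEquiv (fun _ : Fin (k+2) => Fin M)) (m, w)) (k+1)))) n
          = α ^ ((Finset.univ.filter (fun l : Fin (k+1) => w l ∉ S)).card) *
            ∑ m : Fin M, (if m ∈ S then (1:ℝ) else α) *
              ∑ n, (backVec N (fun l => T l (extWalk w l) (extWalk w (l+1))) k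
                ((T k (extWalk w k) m).mulVec (rb (k+1) m))) n := by
            rw [Finset.mul_sum]
            apply Finset.sum_congr rfl
            intro m _
            rw [hw m, hb m]; ring
        _ = _ := by
            congr 1
            rw [hstep k hkL (extWalk w k)]
            rw [backVec_eq, map_sum]
            simp only [map_smul, ← backVec_eq, Finset.sum_apply, Pi.smul_apply,
              smul_eq_mul, Finset.mul_sum]
            rw [Finset.sum_comm]
  simp only [← hbase]
  exact key L (le_refl L)
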